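/- arXiv:math/0003158 — 2 statements merged into one kernel-verified Lean document; each statement's English description precedes it below -/
import Mathlib

section
/- Let V be a finite-dimensional vector space over a field of characteristic zero with basis (φ_α), and suppose G_{αβγ} is a totally symmetric array such that the matrix G_{αβ} := G_{α1β} (for a distinguished index 1) is invertible with inverse G^{αβ}, and the WDVV identity holds: Σ_{ε,ε'} G_{αβε} G^{εε'} G_{ε'γδ} is totally symmetric in α,β,γ,δ. Define a bilinear product by (φ_α • φ_β) := Σ_{γ,δ} G_{αβγ} G^{γδ} φ_δ. Then this product is commutative and associative. -/
/-- WDVV implies associativity of the quantum product. Let `G α β γ` be a totally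
symmetric array over a field of characteristic zero, with distinguished index `e`,
such that the "metric" `gmat α β = G α e β` is invertible with inverse `ginv`,
and the contraction `∑ ε ε', G α β ε * ginv ε ε' * G ε' γ δ` is totally symmetric
in `α β γ δ`.  Then the bilinear product with structure constants
`(φ_α • φ_β) = ∑ γ δ, G α β γ * ginv γ δ * φ_δ` (extended bilinearly to coordinate
vectors in `ι → k`) is commutative and associative. -/
theorem wdvv_quantum_product_comm_assoc {k : Type*} [Field k] [CharZero k]
    {ι : Type*} [Fintype ι] [DecidableEq ι]
    (G : ι → ι → ι → k) (e : ι)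
    (hGsymm₁ : ∀ α β γ, G α β γ = G β α γ)
    (hGsymm₂ : ∀ α β γ, G α β γ = G α γ β)
    (ginv : Matrix ι ι k)
    (hinv₁ : (Matrix.of fun α β => G α e β) * ginv = 1)
    (hinv₂ : ginv * (Matrix.of fun α β => G α e β) = 1)
    -- the contracted 4-tensor
    (T : ι → ι → ι → ι → k)
    (hT : ∀ α β γ δ, T α β γ δ = ∑ ε, ∑ ε', G α β ε * ginv ε ε' * G ε' γ δ)
    -- WDVV: total symmetry of the 4-tensor
    (hWDVV₁ : ∀ α β γ δ, T α β γ δ = T β α γ δ)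
    (hWDVV₂ : ∀ α β γ δ, T α β γ δ = T α γ β δ)
    (hWDVV₃ : ∀ α β γ δ, T α β γ δ = T α β δ γ)
    -- the quantum product on coordinate vectors
    (mul : (ι → k) → (ι → k) → (ι → k))
    (hmul : ∀ a b δ, mul a b δ = ∑ α, ∑ β, ∑ γ, a α * b β * G α β γ * ginv γ δ) :
    (∀ a b, mul a b = mul b a) ∧ (∀ a b c, mul (mul a b) c = mul a (mul b c)) := by
  classical
  have hcomm : ∀ a b, mul a b = mul b a := by
    intro a b; funext δ
    rw [hmul, hmul, Finset.sum_comm]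
    refine Finset.sum_congr rfl fun β _ => Finset.sum_congr rfl fun α _ =>
      Finset.sum_congr rfl fun γ _ => ?_
    rw [hGsymm₁ α β γ]; ring
  have key : ∀ (x y z : ι → k) (δ : ι), mul (mul x y) z δ
      = ∑ p, ∑ q, ∑ r, x p * y q * z r * (∑ s, T p q r s * ginv s δ) := by
    intro x y z δ
    have e1 : mul (mul x y) z δ
        = ∑ t : (ι × ι × ι) × ι × ι × ι,
            x t.2.1 * y t.2.2.1 * G t.2.1 t.2.2.1 t.2.2.2 * ginv t.2.2.2 t.1.1
              * z t.1.2.1 * G t.1.1 t.1.2.1 t.1.2.2 * ginv t.1.2.2 δ := by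
      simp only [hmul, Finset.sum_mul, Fintype.sum_prod_type]
    have e2 : (∑ p, ∑ q, ∑ r, x p * y q * z r * (∑ s, T p q r s * ginv s δ))
        = ∑ t : (ι × ι × ι) × ι × ι × ι,
            x t.1.1 * y t.1.2.1 * z t.1.2.2
              * (G t.1.1 t.1.2.1 t.2.2.1 * ginv t.2.2.1 t.2.2.2
                  * G t.2.2.2 t.1.2.2 t.2.1 * ginv t.2.1 δ) := by
      simp only [hT, Finset.sum_mul, Finset.mul_sum, Fintype.sum_prod_type]
    rw [e1, e2]
    refine Fintype.sum_equiv
      (Equiv.mk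
        (fun t => ((t.2.1, t.2.2.1, t.1.2.1), t.1.2.2, t.2.2.2, t.1.1))
        (fun t => ((t.2.2.2, t.1.2.2, t.2.1), t.1.1, t.1.2.1, t.2.2.1))
        (fun ⟨⟨_, _, _⟩, _, _, _⟩ => rfl) (fun ⟨⟨_, _, _⟩, _, _, _⟩ => rfl)) _ _ ?_
    rintro ⟨⟨α', β', γ'⟩, p, q, γ⟩
    simp only [Equiv.coe_fn_mk]
    ring
  refine ⟨hcomm, fun a b c => ?_⟩
  funext δ
  rw [key a b c δ, hcomm a (mul b c), key b c a δ]
  have h1 : (∑ p, ∑ q, ∑ r, a p * b q * c r * (∑ s, T p q r s * ginv s δ))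
      = ∑ t : ι × ι × ι, a t.1 * b t.2.1 * c t.2.2 * (∑ s, T t.1 t.2.1 t.2.2 s * ginv s δ) := by
    simp only [Fintype.sum_prod_type]
  have h2 : (∑ p, ∑ q, ∑ r, b p * c q * a r * (∑ s, T p q r s * ginv s δ))
      = ∑ t : ι × ι × ι, b t.1 * c t.2.1 * a t.2.2 * (∑ s, T t.1 t.2.1 t.2.2 s * ginv s δ) := by
    simp only [Fintype.sum_prod_type]
  rw [h1, h2]
  refine Fintype.sum_equiv
    (Equiv.mk (fun t => (t.2.1, t.2.2, t.1)) (fun t => (t.2.2, t.1, t.2.1))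
      (fun ⟨_, _, _⟩ => rfl) (fun ⟨_, _, _⟩ => rfl)) _ _ ?_
  rintro ⟨p, q, r⟩
  simp only [Equiv.coe_fn_mk]
  have hs : (∑ s, T p q r s * ginv s δ) = ∑ s, T q r p s * ginv s δ :=
    Finset.sum_congr rfl fun s _ => by rw [hWDVV₁ p q r s, hWDVV₂ q p r s]
  rw [hs]; ring
end

section
/- Let G be a smooth function on an open subset of R^n with invertible Hessian (G_{αβ}), define the matrices A_α with entries (A_α)^ν_μ = Σ_ε G_{μαε} G^{εν} (the quantum multiplication operators), and assume the WDVV identity: Σ_{ε,ε'} G_{αβε} G^{εε'} G_{ε'γδ} is totally symmetric. Then for any scalar q ≠ 1, the connection ∇_q = (1-q)d - Σ_α A_α dt_α on the trivial bundle is flat; i.e., for all α, β: ∂_α A_β = ∂_β A_α and A_α A_β = A_β A_α. -/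
open scoped BigOperators ContDiff

/-- Partial derivative in the `α`-th coordinate direction of a function on `ℝⁿ`. -/
noncomputable def pd {n : ℕ} (α : Fin n) (f : (Fin n → ℝ) → ℝ) :
    (Fin n → ℝ) → ℝ :=
  fun x => fderiv ℝ f x (Pi.single α 1)

lemma pd_congr {n : ℕ} {α : Fin n} {f g : (Fin n → ℝ) → ℝ} {x} (h : f =ᶠ[nhds x] g) :
    pd α f x = pd α g x := by
  unfold pd; rw [h.fderiv_eq]

lemma ContDiffAt.pd' {n : ℕ} (α : Fin n) {f : (Fin n → ℝ) → ℝ} {x}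
    (hf : ContDiffAt ℝ ∞ f x) : ContDiffAt ℝ ∞ (pd α f) x := by
  have h := hf.fderiv_right (m := ∞) (by simp)
  exact h.clm_apply contDiffAt_const

lemma pd_comm {n : ℕ} {a b : Fin n} {f : (Fin n → ℝ) → ℝ} {x}
    (hf : ContDiffAt ℝ ∞ f x) : pd a (pd b f) x = pd b (pd a f) x := by
  have hd : DifferentiableAt ℝ (fderiv ℝ f) x :=
    (hf.fderiv_right (m := ∞) (by simp)).differentiableAt (by simp)
  have h1 : ∀ (v w : Fin n → ℝ), fderiv ℝ (fun y => fderiv ℝ f y w) x v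
      = fderiv ℝ (fderiv ℝ f) x v w := by
    intro v w
    rw [fderiv_clm_apply hd (differentiableAt_const _)]
    simp
  have hsymm := hf.isSymmSndFDerivAt (by simp only [minSmoothness_of_isRCLikeNormedField]; norm_cast)
  unfold pd
  rw [h1, h1, hsymm.eq]

lemma pd_sum {n : ℕ} {ι : Type*} (s : Finset ι) (α : Fin n)
    (f : ι → (Fin n → ℝ) → ℝ) {x}
    (hf : ∀ i ∈ s, DifferentiableAt ℝ (f i) x) :
    pd α (fun y => ∑ i ∈ s, f i y) x = ∑ i ∈ s, pd α (f i) x := by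
  unfold pd
  rw [fderiv_fun_sum hf]
  simp

lemma pd_mul {n : ℕ} (α : Fin n) {f g : (Fin n → ℝ) → ℝ} {x}
    (hf : DifferentiableAt ℝ f x) (hg : DifferentiableAt ℝ g x) :
    pd α (fun y => f y * g y) x = pd α f x * g x + f x * pd α g x := by
  unfold pd
  rw [fderiv_fun_mul hf hg]
  simp
  ring

lemma pd_const {n : ℕ} (α : Fin n) (c : ℝ) (x : Fin n → ℝ) :
    pd α (fun _ => c) x = 0 := by
  unfold pd
  simp

lemma contDiffAt_finset_prod {n : ℕ} {ι : Type*} [DecidableEq ι] {s : Finset ι}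
    {f : ι → (Fin n → ℝ) → ℝ} {x}
    (hf : ∀ i ∈ s, ContDiffAt ℝ ∞ (f i) x) :
    ContDiffAt ℝ ∞ (fun y => ∏ i ∈ s, f i y) x := by
  induction s using Finset.induction with
  | empty => simpa using contDiffAt_const
  | insert _ _ hi ih =>
      simp only [Finset.prod_insert hi]
      exact (hf _ (Finset.mem_insert_self _ _)).mul
        (ih fun i hi' => hf i (Finset.mem_insert_of_mem hi'))

lemma contDiffAt_det {n : ℕ} {M : (Fin n → ℝ) → Matrix (Fin n) (Fin n) ℝ} {x}
    (h : ∀ i j, ContDiffAt ℝ ∞ (fun y => M y i j) x) :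
    ContDiffAt ℝ ∞ (fun y => (M y).det) x := by
  simp only [Matrix.det_apply']
  exact ContDiffAt.sum fun σ _ =>
    contDiffAt_const.mul (contDiffAt_finset_prod (fun i _ => h (σ i) i))

lemma sum_shuffle2 {m : ℕ} (a : Fin m → ℝ) (b : Fin m → Fin m → ℝ)
    (c : Fin m → Fin m → ℝ) (d : Fin m → ℝ) :
    ∑ ρ, (∑ ε, a ε * b ε ρ) * (∑ σ, c ρ σ * d σ)
      = ∑ σ, (∑ ε, ∑ ρ, a ε * b ε ρ * c ρ σ) * d σ := by
  simp only [Finset.sum_mul, Finset.mul_sum]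
  rw [Finset.sum_comm]
  refine Finset.sum_congr rfl fun σ _ => ?_
  rw [Finset.sum_comm]
  refine Finset.sum_congr rfl fun ε _ => Finset.sum_congr rfl fun ρ _ => by ring

lemma sum_shuffle3 {m : ℕ} (a : Fin m → ℝ) (b : Fin m → Fin m → ℝ)
    (c : Fin m → Fin m → ℝ) (d : Fin m → ℝ) :
    ∑ ε, a ε * (∑ ε', ∑ ρ, b ε ε' * c ε' ρ * d ρ)
      = ∑ ρ, (∑ ε, ∑ ε', a ε * b ε ε' * c ε' ρ) * d ρ := by
  simp only [Finset.mul_sum, Finset.sum_mul]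
  conv_rhs => rw [Finset.sum_comm]
  refine Finset.sum_congr rfl fun ε _ => ?_
  rw [Finset.sum_comm]
  refine Finset.sum_congr rfl fun ρ _ =>
    Finset.sum_congr rfl fun ε' _ => by ring

/-- Flatness of the connections `∇_q = (1-q)d - ∑ A_α dt_α` for `q ≠ 1`.  Let `G` be a
smooth function on an open set `U ⊆ ℝⁿ` with invertible Hessian `(G_{αβ})`, let
`(A_α)^ν_μ = ∑ ε, G_{μαε} G^{εν}` be the quantum multiplication operators, and assume the
WDVV identity (total symmetry of `∑ ε ε', G_{αβε} G^{εε'} G_{ε'γδ}`).  Then for any `q ≠ 1`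
the connection `∇_q` is flat, i.e. `∂_α A_β = ∂_β A_α` and `A_α A_β = A_β A_α` on `U`. -/
theorem wdvv_connection_flat {n : ℕ} {U : Set (Fin n → ℝ)} (hU : IsOpen U)
    (G : (Fin n → ℝ) → ℝ) (hG : ContDiffOn ℝ (⊤ : ℕ∞) G U)
    (gmat : (Fin n → ℝ) → Matrix (Fin n) (Fin n) ℝ)
    (hgmat : ∀ x ∈ U, ∀ α β, gmat x α β = pd α (pd β G) x)
    (G3 : (Fin n → ℝ) → Fin n → Fin n → Fin n → ℝ)
    (hG3 : ∀ x ∈ U, ∀ α β γ, G3 x α β γ = pd α (pd β (pd γ G)) x)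
    (ginv : (Fin n → ℝ) → Matrix (Fin n) (Fin n) ℝ)
    (hginv₁ : ∀ x ∈ U, gmat x * ginv x = 1)
    (hginv₂ : ∀ x ∈ U, ginv x * gmat x = 1)
    -- the quantum multiplication operators
    (A : Fin n → (Fin n → ℝ) → Matrix (Fin n) (Fin n) ℝ)
    (hA : ∀ α, ∀ x ∈ U, ∀ μ ν, A α x μ ν = ∑ ε, G3 x μ α ε * ginv x ε ν)
    -- WDVV: total symmetry of the contracted 4-tensor
    (T : (Fin n → ℝ) → Fin n → Fin n → Fin n → Fin n → ℝ)
    (hT : ∀ x ∈ U, ∀ α β γ δ,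
      T x α β γ δ = ∑ ε, ∑ ε', G3 x α β ε * ginv x ε ε' * G3 x ε' γ δ)
    (hWDVV₁ : ∀ x ∈ U, ∀ α β γ δ, T x α β γ δ = T x β α γ δ)
    (hWDVV₂ : ∀ x ∈ U, ∀ α β γ δ, T x α β γ δ = T x α γ β δ)
    (hWDVV₃ : ∀ x ∈ U, ∀ α β γ δ, T x α β γ δ = T x α β δ γ)
    (q : ℝ) (hq : q ≠ 1) :
    ∀ x ∈ U, ∀ α β : Fin n,
      (∀ μ ν, pd α (fun y => A β y μ ν) x = pd β (fun y => A α y μ ν) x) ∧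
        A α x * A β x = A β x * A α x := by
  classical
  intro x hx α β
  constructor
  · -- flatness: the derivative part
    intro μ ν
    have hle1 : (∞ : WithTop ℕ∞) ≠ 0 := by simp
    have hGs : ∀ y ∈ U, ContDiffAt ℝ ∞ G y := fun y hy =>
      (hG.contDiffAt (hU.mem_nhds hy)).of_le (by simp)
    have h1 : ∀ c : Fin n, ∀ y ∈ U, ContDiffAt ℝ ∞ (pd c G) y :=
      fun c y hy => (hGs y hy).pd' c
    have h2 : ∀ b c : Fin n, ∀ y ∈ U, ContDiffAt ℝ ∞ (pd b (pd c G)) y :=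
      fun b c y hy => (h1 c y hy).pd' b
    have h3 : ∀ a b c : Fin n, ∀ y ∈ U, ContDiffAt ℝ ∞ (pd a (pd b (pd c G))) y :=
      fun a b c y hy => (h2 b c y hy).pd' a
    -- the explicit smooth inverse matrix
    set dm : (Fin n → ℝ) → Matrix (Fin n) (Fin n) ℝ :=
      fun y => Matrix.of fun a b => pd a (pd b G) y with hdm
    have hdmE : ∀ y ∈ U, dm y = gmat y := fun y hy =>
      Matrix.ext fun a b => (hgmat y hy a b).symm
    set gi : (Fin n → ℝ) → Matrix (Fin n) (Fin n) ℝ :=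
      fun y => ((dm y).det)⁻¹ • (dm y).adjugate with hgidef
    have hgiU : ∀ y ∈ U, ginv y = gi y := by
      intro y hy
      have h1' : (gmat y)⁻¹ = ginv y := Matrix.inv_eq_right_inv (hginv₁ y hy)
      rw [← h1', Matrix.inv_def, Ring.inverse_eq_inv,
        show gi y = ((dm y).det)⁻¹ • (dm y).adjugate from rfl, hdmE y hy]
    have hdmS : ∀ (a b : Fin n), ∀ y ∈ U, ContDiffAt ℝ ∞ (fun z => dm z a b) y :=
      fun a b y hy => h2 a b y hy
    have hdetS : ∀ y ∈ U, ContDiffAt ℝ ∞ (fun z => (dm z).det) y := fun y hy =>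
      contDiffAt_det (fun i j => hdmS i j y hy)
    have hdet0 : ∀ y ∈ U, (dm y).det ≠ 0 := fun y hy => by
      rw [hdmE y hy]
      exact (Matrix.isUnit_det_of_right_inverse (hginv₁ y hy)).ne_zero
    have hadjS : ∀ (i j : Fin n), ∀ y ∈ U,
        ContDiffAt ℝ ∞ (fun z => (dm z).adjugate i j) y := by
      intro i j y hy
      simp only [Matrix.adjugate_apply]
      apply contDiffAt_det
      intro a b
      by_cases hab : a = j
      · simp only [Matrix.updateRow_apply, if_pos hab]
        exact contDiffAt_const
      · simp only [Matrix.updateRow_apply, if_neg hab]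
        exact hdmS a b y hy
    have hgiS : ∀ (i j : Fin n), ∀ y ∈ U, ContDiffAt ℝ ∞ (fun z => gi z i j) y := by
      intro i j y hy
      have he : (fun z => gi z i j) = fun z => ((dm z).det)⁻¹ * (dm z).adjugate i j := by
        funext z
        simp [hgidef, Matrix.smul_apply, smul_eq_mul]
      rw [he]
      exact ((hdetS y hy).inv (hdet0 y hy)).mul (hadjS i j y hy)
    -- symmetry of third partials at x
    have sym3 : ∀ a b c : Fin n, pd a (pd b (pd c G)) x = pd b (pd a (pd c G)) x :=
      fun a b c => pd_comm (h1 c x hx)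
    -- symmetry of the relevant fourth partials at x
    have sym4 : ∀ a b c : Fin n,
        pd a (pd μ (pd b (pd c G))) x = pd b (pd μ (pd a (pd c G))) x := by
      intro a b c
      have e1 : pd a (pd μ (pd b (pd c G))) x = pd μ (pd a (pd b (pd c G))) x :=
        pd_comm ((h1 c x hx).pd' b)
      have e2 : pd μ (pd a (pd b (pd c G))) x = pd μ (pd b (pd a (pd c G))) x := by
        apply pd_congr
        filter_upwards [hU.mem_nhds hx] with z hz
        exact pd_comm (h1 c z hz)
      have e3 : pd μ (pd b (pd a (pd c G))) x = pd b (pd μ (pd a (pd c G))) x :=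
        (pd_comm ((h1 c x hx).pd' a)).symm
      rw [e1, e2, e3]
    -- derivative of the entries of the inverse matrix
    have pdgi : ∀ (γ σ' ν' : Fin n),
        pd γ (fun y => gi y σ' ν') x
          = -∑ ε, ∑ ρ, gi x σ' ε * pd γ (pd ε (pd ρ G)) x * gi x ρ ν' := by
      intro γ σ' ν'
      have hrel : ∀ ε : Fin n,
          ∑ ρ, (pd γ (pd ε (pd ρ G)) x * gi x ρ ν'
            + pd ε (pd ρ G) x * pd γ (fun y => gi y ρ ν') x) = 0 := by
        intro ε
        have hconst : pd γ (fun y => ∑ ρ, pd ε (pd ρ G) y * gi y ρ ν') x = 0 := by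
          have heq : (fun y => ∑ ρ, pd ε (pd ρ G) y * gi y ρ ν')
              =ᶠ[nhds x] fun _ => (1 : Matrix (Fin n) (Fin n) ℝ) ε ν' := by
            filter_upwards [hU.mem_nhds hx] with y hy
            have hmm : ∑ ρ, pd ε (pd ρ G) y * gi y ρ ν' = (dm y * gi y) ε ν' := by
              rw [Matrix.mul_apply]
              rfl
            rw [hmm, hdmE y hy, ← hgiU y hy, hginv₁ y hy]
          rw [pd_congr heq, pd_const]
        rw [pd_sum _ _ _ (fun ρ _ =>
          ((h2 ε ρ x hx).mul (hgiS ρ ν' x hx)).differentiableAt hle1)] at hconst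
        rw [Finset.sum_congr rfl (fun ρ _ => pd_mul γ
          ((h2 ε ρ x hx).differentiableAt hle1)
          ((hgiS ρ ν' x hx).differentiableAt hle1))] at hconst
        exact hconst
      have hmain : ∑ ε, gi x σ' ε * (∑ ρ, (pd γ (pd ε (pd ρ G)) x * gi x ρ ν'
            + pd ε (pd ρ G) x * pd γ (fun y => gi y ρ ν') x)) = 0 := by
        simp [hrel]
      simp only [Finset.mul_sum, mul_add, Finset.sum_add_distrib] at hmain
      have hsecond : ∑ ε, ∑ ρ, gi x σ' ε * (pd ε (pd ρ G) x * pd γ (fun y => gi y ρ ν') x)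
          = pd γ (fun y => gi y σ' ν') x := by
        rw [Finset.sum_comm]
        have hone : ∀ ρ : Fin n, ∑ ε, gi x σ' ε * pd ε (pd ρ G) x
            = (1 : Matrix (Fin n) (Fin n) ℝ) σ' ρ := by
          intro ρ
          have hmm : ∑ ε, gi x σ' ε * pd ε (pd ρ G) x = (gi x * dm x) σ' ρ := by
            rw [Matrix.mul_apply]
            rfl
          rw [hmm, hdmE x hx, ← hgiU x hx, hginv₂ x hx]
        calc ∑ ρ, ∑ ε, gi x σ' ε * (pd ε (pd ρ G) x * pd γ (fun y => gi y ρ ν') x)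
            = ∑ ρ, (∑ ε, gi x σ' ε * pd ε (pd ρ G) x) * pd γ (fun y => gi y ρ ν') x := by
              refine Finset.sum_congr rfl fun ρ _ => ?_
              rw [Finset.sum_mul]
              exact Finset.sum_congr rfl fun ε _ => by ring
          _ = ∑ ρ, (1 : Matrix (Fin n) (Fin n) ℝ) σ' ρ * pd γ (fun y => gi y ρ ν') x := by
              exact Finset.sum_congr rfl fun ρ _ => by rw [hone]
          _ = pd γ (fun y => gi y σ' ν') x := by
              simp [Matrix.one_apply]
      rw [hsecond] at hmain
      have : pd γ (fun y => gi y σ' ν') x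
          = -∑ ε, ∑ ρ, gi x σ' ε * (pd γ (pd ε (pd ρ G)) x * gi x ρ ν') := by
        linarith [hmain]
      rw [this]
      congr 1
      exact Finset.sum_congr rfl fun ε _ => Finset.sum_congr rfl fun ρ _ => by ring
    -- derivative of the entries of A
    have pdA : ∀ γ δ : Fin n,
        pd γ (fun y => A δ y μ ν) x
          = (∑ ε, pd γ (pd μ (pd δ (pd ε G))) x * gi x ε ν)
            + ∑ ε, pd μ (pd δ (pd ε G)) x * pd γ (fun y => gi y ε ν) x := by
      intro γ δ
      have hAe : (fun y => A δ y μ ν)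
          =ᶠ[nhds x] fun y => ∑ ε, pd μ (pd δ (pd ε G)) y * gi y ε ν := by
        filter_upwards [hU.mem_nhds hx] with y hy
        rw [hA δ y hy μ ν]
        exact Finset.sum_congr rfl fun ε _ => by rw [hG3 y hy, hgiU y hy]
      rw [pd_congr hAe, pd_sum _ _ _ (fun ε _ =>
        ((h3 μ δ ε x hx).mul (hgiS ε ν x hx)).differentiableAt hle1),
        Finset.sum_congr rfl (fun ε _ => pd_mul γ
          ((h3 μ δ ε x hx).differentiableAt hle1)
          ((hgiS ε ν x hx).differentiableAt hle1)),
        Finset.sum_add_distrib]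
    -- the second piece in terms of T
    have D2 : ∀ γ δ : Fin n,
        ∑ ε, pd μ (pd δ (pd ε G)) x * pd γ (fun y => gi y ε ν) x
          = -∑ ρ, T x μ δ γ ρ * gi x ρ ν := by
      intro γ δ
      calc ∑ ε, pd μ (pd δ (pd ε G)) x * pd γ (fun y => gi y ε ν) x
          = ∑ ε, pd μ (pd δ (pd ε G)) x
              * -(∑ ε', ∑ ρ, gi x ε ε' * pd γ (pd ε' (pd ρ G)) x * gi x ρ ν) := by
            exact Finset.sum_congr rfl fun ε _ => by rw [pdgi γ ε ν]
        _ = -∑ ε, pd μ (pd δ (pd ε G)) x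
              * (∑ ε', ∑ ρ, gi x ε ε' * pd γ (pd ε' (pd ρ G)) x * gi x ρ ν) := by
            simp [Finset.sum_neg_distrib]
        _ = -∑ ρ, (∑ ε, ∑ ε', pd μ (pd δ (pd ε G)) x * gi x ε ε'
              * pd γ (pd ε' (pd ρ G)) x) * gi x ρ ν := by
            rw [sum_shuffle3 (fun ε => pd μ (pd δ (pd ε G)) x) (fun ε ε' => gi x ε ε')
              (fun ε' ρ => pd γ (pd ε' (pd ρ G)) x) (fun ρ => gi x ρ ν)]
        _ = -∑ ρ, T x μ δ γ ρ * gi x ρ ν := by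
            refine congrArg Neg.neg (Finset.sum_congr rfl fun ρ _ => ?_)
            rw [hT x hx]
            congr 1
            refine Finset.sum_congr rfl fun ε _ => Finset.sum_congr rfl fun ε' _ => ?_
            rw [hG3 x hx, hG3 x hx, hgiU x hx, sym3 γ ε' ρ]
    rw [pdA α β, pdA β α, D2 α β, D2 β α]
    congr 1
    · exact Finset.sum_congr rfl fun ε _ => by rw [sym4 α β ε]
    · refine congrArg Neg.neg (Finset.sum_congr rfl fun ρ _ => ?_)
      rw [hWDVV₂ x hx]
  · -- commutativity
    have key : ∀ γ δ : Fin n, A γ x * A δ x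
        = Matrix.of fun μ ν => ∑ σ, T x μ γ δ σ * ginv x σ ν := by
      intro γ δ
      ext μ ν
      rw [Matrix.mul_apply, Matrix.of_apply]
      simp only [hA γ x hx, hA δ x hx]
      rw [sum_shuffle2 (fun ε => G3 x μ γ ε) (fun ε ρ => ginv x ε ρ)
        (fun ρ ε => G3 x ρ δ ε) (fun ε => ginv x ε ν)]
      exact Finset.sum_congr rfl fun σ _ => by rw [hT x hx]
    rw [key, key]
    ext μ ν
    simp only [Matrix.of_apply]
    exact Finset.sum_congr rfl fun σ _ => by rw [hWDVV₂ x hx]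
end
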